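/- arXiv:1602.04704 — 6 statements merged into one kernel-verified Lean document; each statement's English description precedes it below -/
import Mathlib

section
/- Let H be a real Hilbert space, let B1, B2 : H × H → ℝ be continuous bilinear forms, let k_min > 0 be such that B_i(v,v) ≥ k_min ‖v‖² for all v ∈ H and i = 1,2, and let δ ≥ 0 be such that |B1(v,w) − B2(v,w)| ≤ δ ‖v‖ ‖w‖ for all v, w ∈ H. Let L : H → ℝ be a continuous linear functional, and suppose p1, p2 ∈ H satisfy B1(p1, q) = L(q) and B2(p2, q) = L(q) for all q ∈ H. Then ‖p1 − p2‖ ≤ (‖L‖ / k_min²) · δ. -/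
/-!
Testing the equation `B₁ p₁ = L` with `e = p₁ - p₂` gives `B₁ e e = B₂ p₂ e - B₁ p₂ e`, so
coercivity of `B₁` yields `k ‖e‖ ≤ δ ‖p₂‖`; coercivity of `B₂` tested with `p₂` gives the
a priori bound `k ‖p₂‖ ≤ ‖L‖`, and the two combine to `k² ‖e‖ ≤ δ ‖L‖`.
-/

lemma mul_le_of_mul_sq_le_mul {k x c : ℝ} (hx : 0 ≤ x) (hc : 0 ≤ c)
    (h : k * x ^ 2 ≤ c * x) : k * x ≤ c := by
  rcases hx.eq_or_lt with rfl | hx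
  · simpa using hc
  · nlinarith

section CoerciveForm

variable {E : Type*} [SeminormedAddCommGroup E] [NormedSpace ℝ E]
  {B B₁ B₂ : E →L[ℝ] E →L[ℝ] ℝ} {L : E →L[ℝ] ℝ} {k : ℝ}

lemma mul_norm_le_opNorm_of_coercive (hB : ∀ v, k * ‖v‖ ^ 2 ≤ B v v) {u : E}
    (hu : ∀ q, B u q = L q) : k * ‖u‖ ≤ ‖L‖ := by
  refine mul_le_of_mul_sq_le_mul (norm_nonneg u) (norm_nonneg L) ?_
  calc k * ‖u‖ ^ 2 ≤ B u u := hB u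
    _ = L u := hu u
    _ ≤ ‖L‖ * ‖u‖ := (le_abs_self _).trans (L.le_opNorm u)

lemma mul_norm_sub_le_of_coercive {δ : ℝ} (hδ : 0 ≤ δ) (hB₁ : ∀ v, k * ‖v‖ ^ 2 ≤ B₁ v v)
    (hdiff : ∀ v w, |B₁ v w - B₂ v w| ≤ δ * ‖v‖ * ‖w‖) {p₁ p₂ : E}
    (h₁ : ∀ q, B₁ p₁ q = L q) (h₂ : ∀ q, B₂ p₂ q = L q) :
    k * ‖p₁ - p₂‖ ≤ δ * ‖p₂‖ := by
  set e := p₁ - p₂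
  have h_error : B₁ e e = -(B₁ p₂ e - B₂ p₂ e) := by
    rw [show B₁ e e = B₁ p₁ e - B₁ p₂ e by simp [e], h₁, ← h₂]
    ring
  refine mul_le_of_mul_sq_le_mul (norm_nonneg e) (by positivity) ?_
  calc k * ‖e‖ ^ 2 ≤ B₁ e e := hB₁ e
    _ ≤ |B₁ p₂ e - B₂ p₂ e| := h_error ▸ neg_le_abs _
    _ ≤ δ * ‖p₂‖ * ‖e‖ := hdiff p₂ e

end CoerciveForm

theorem statement4_general {H : Type*} [NormedAddCommGroup H] [InnerProductSpace ℝ H]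
    (B1 B2 : H →L[ℝ] H →L[ℝ] ℝ)
    (kmin : ℝ) (hk : 0 < kmin)
    (hc1 : ∀ v, kmin * ‖v‖ ^ 2 ≤ B1 v v) (hc2 : ∀ v, kmin * ‖v‖ ^ 2 ≤ B2 v v)
    (δ : ℝ) (hδ : 0 ≤ δ) (hdiff : ∀ v w, |B1 v w - B2 v w| ≤ δ * ‖v‖ * ‖w‖)
    (L : H →L[ℝ] ℝ) (p1 p2 : H)
    (h1 : ∀ q, B1 p1 q = L q) (h2 : ∀ q, B2 p2 q = L q) :
    ‖p1 - p2‖ ≤ ‖L‖ / kmin ^ 2 * δ := by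
  have h_error := mul_norm_sub_le_of_coercive hδ hc1 hdiff h1 h2
  have h_bound := mul_norm_le_opNorm_of_coercive hc2 h2
  rw [div_mul_eq_mul_div, le_div_iff₀ (by positivity)]
  calc ‖p1 - p2‖ * kmin ^ 2 = kmin * (kmin * ‖p1 - p2‖) := by ring
    _ ≤ kmin * (δ * ‖p2‖) := by gcongr
    _ = δ * (kmin * ‖p2‖) := by ring
    _ ≤ δ * ‖L‖ := by gcongr
    _ = ‖L‖ * δ := by ring

/-- Abstract continuity of the forward map: if `B1, B2` are bounded bilinear
forms on a Hilbert space `H`, coercive with common constant `k_min > 0`, whose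
difference is bounded by `δ`, and `p1, p2` solve the variational problems
`B_i(p_i, q) = L(q)` for a bounded linear functional `L`, then
`‖p1 − p2‖ ≤ (‖L‖/k_min²)·δ`. -/
theorem statement4 {H : Type*} [NormedAddCommGroup H] [InnerProductSpace ℝ H]
    [CompleteSpace H] (B1 B2 : H →L[ℝ] H →L[ℝ] ℝ)
    (kmin : ℝ) (hk : 0 < kmin)
    (hc1 : ∀ v, kmin * ‖v‖ ^ 2 ≤ B1 v v) (hc2 : ∀ v, kmin * ‖v‖ ^ 2 ≤ B2 v v)
    (δ : ℝ) (hδ : 0 ≤ δ) (hdiff : ∀ v w, |B1 v w - B2 v w| ≤ δ * ‖v‖ * ‖w‖)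
    (L : H →L[ℝ] ℝ) (p1 p2 : H)
    (h1 : ∀ q, B1 p1 q = L q) (h2 : ∀ q, B2 p2 q = L q) :
    ‖p1 - p2‖ ≤ ‖L‖ / kmin ^ 2 * δ :=
  statement4_general B1 B2 kmin hk hc1 hc2 δ hδ hdiff L p1 p2 h1 h2
end

section
/- Let (Ω, ℙ) be a probability space, let Q̂ and Ẑ be real random variables with Ẑ(ω) ≠ 0 for almost every ω, and let Q ∈ ℝ and Z ∈ ℝ with Z ≠ 0. Suppose in addition there is a constant K ≥ 0 such that |Q̂(ω)/Ẑ(ω)| ≤ K for almost every ω. Then the mean square error of the ratio estimator satisfies E[(Q/Z − Q̂/Ẑ)²] ≤ (2/Z²) · max{1, K²} · ( E[(Q̂ − Q)²] + E[(Ẑ − Z)²] ). -/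
/-!
Writing `r = Q̂/Ẑ`, one has `Q/Z - r = ((Q - Q̂) + r (Ẑ - Z)) / Z`, and
`(a + r b)² ≤ 2 (a² + r² b²) ≤ 2 max{1, K²} (a² + b²)` when `|r| ≤ K`.
This pointwise bound holds almost surely and integrates to the claim.
-/

open MeasureTheory

lemma div_sub_div_eq_sub_add_div_mul {Q Z q z : ℝ} (hZ : Z ≠ 0) (hz : z ≠ 0) :
    Q / Z - q / z = (Q - q + q / z * (z - Z)) / Z := by
  field_simp
  ring

lemma add_mul_sq_le_two_mul_max {a b r K : ℝ} (hr : |r| ≤ K) :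
    (a + r * b) ^ 2 ≤ 2 * max 1 (K ^ 2) * (a ^ 2 + b ^ 2) := by
  have hr2 : r ^ 2 ≤ max 1 (K ^ 2) :=
    (sq_le_sq' (neg_le_of_abs_le hr) (le_of_abs_le hr)).trans (le_max_right _ _)
  have hb2 : r ^ 2 * b ^ 2 ≤ max 1 (K ^ 2) * b ^ 2 :=
    mul_le_mul_of_nonneg_right hr2 (sq_nonneg b)
  have ha2 : a ^ 2 ≤ max 1 (K ^ 2) * a ^ 2 :=
    le_mul_of_one_le_left (sq_nonneg a) (le_max_left _ _)
  nlinarith [sq_nonneg (a - r * b)]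

lemma sq_div_sub_div_le {Q Z q z K : ℝ} (hZ : Z ≠ 0) (hz : z ≠ 0) (hK : |q / z| ≤ K) :
    (Q / Z - q / z) ^ 2 ≤ 2 / Z ^ 2 * max 1 (K ^ 2) * ((q - Q) ^ 2 + (z - Z) ^ 2) := by
  have key := add_mul_sq_le_two_mul_max (a := Q - q) (b := z - Z) hK
  rw [div_sub_div_eq_sub_add_div_mul hZ hz, div_pow, div_le_iff₀ (by positivity)]
  calc (Q - q + q / z * (z - Z)) ^ 2
      ≤ 2 * max 1 (K ^ 2) * ((Q - q) ^ 2 + (z - Z) ^ 2) := key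
    _ = 2 / Z ^ 2 * max 1 (K ^ 2) * ((q - Q) ^ 2 + (z - Z) ^ 2) * Z ^ 2 := by
      field_simp
      ring

lemma lintegral_ofReal_le_const_mul_add {α : Type*} [MeasurableSpace α] {μ : Measure α}
    {f g h : α → ℝ} {c : ℝ} (hc : 0 ≤ c) (hg : AEMeasurable g μ)
    (hg0 : ∀ᵐ x ∂μ, 0 ≤ g x) (hh0 : ∀ᵐ x ∂μ, 0 ≤ h x)
    (hfgh : ∀ᵐ x ∂μ, f x ≤ c * (g x + h x)) :
    ∫⁻ x, ENNReal.ofReal (f x) ∂μ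
      ≤ ENNReal.ofReal c * (∫⁻ x, ENNReal.ofReal (g x) ∂μ + ∫⁻ x, ENNReal.ofReal (h x) ∂μ) := by
  calc ∫⁻ x, ENNReal.ofReal (f x) ∂μ
      ≤ ∫⁻ x, ENNReal.ofReal c * (ENNReal.ofReal (g x) + ENNReal.ofReal (h x)) ∂μ := by
        refine lintegral_mono_ae ?_
        filter_upwards [hg0, hh0, hfgh] with x hgx hhx hfx
        rw [← ENNReal.ofReal_add hgx hhx, ← ENNReal.ofReal_mul hc]
        exact ENNReal.ofReal_le_ofReal hfx
    _ = ENNReal.ofReal c * (∫⁻ x, ENNReal.ofReal (g x) ∂μ + ∫⁻ x, ENNReal.ofReal (h x) ∂μ) := by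
        rw [lintegral_const_mul' _ _ ENNReal.ofReal_ne_top,
          lintegral_add_left' hg.ennreal_ofReal]

theorem statement9_general {Ω : Type*} [MeasurableSpace Ω] (P : Measure Ω)
    (Qhat Zhat : Ω → ℝ)
    (hQm : Measurable Qhat)
    (hZne : ∀ᵐ ω ∂P, Zhat ω ≠ 0)
    (Q Z : ℝ) (hZ : Z ≠ 0)
    (K : ℝ) (hbd : ∀ᵐ ω ∂P, |Qhat ω / Zhat ω| ≤ K) :
    ∫⁻ ω, ENNReal.ofReal ((Q / Z - Qhat ω / Zhat ω) ^ 2) ∂P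
      ≤ ENNReal.ofReal (2 / Z ^ 2 * max 1 (K ^ 2)) *
        (∫⁻ ω, ENNReal.ofReal ((Qhat ω - Q) ^ 2) ∂P
          + ∫⁻ ω, ENNReal.ofReal ((Zhat ω - Z) ^ 2) ∂P) := by
  refine lintegral_ofReal_le_const_mul_add (by positivity)
    ((hQm.sub measurable_const).pow_const 2).aemeasurable
    (.of_forall fun _ ↦ sq_nonneg _) (.of_forall fun _ ↦ sq_nonneg _) ?_
  filter_upwards [hZne, hbd] with ω hz hb
  exact sq_div_sub_div_le hZ hz hb

/-- Mean square error bound for the ratio estimator with uniformly bounded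
ratio: if `|Q̂/Ẑ| ≤ K` almost surely, then
`E[(Q/Z − Q̂/Ẑ)²] ≤ (2/Z²) max{1, K²} (E[(Q̂ − Q)²] + E[(Ẑ − Z)²])`. -/
theorem statement9 {Ω : Type*} [MeasurableSpace Ω] (P : Measure Ω)
    [IsProbabilityMeasure P] (Qhat Zhat : Ω → ℝ)
    (hQm : Measurable Qhat) (hZm : Measurable Zhat)
    (hZne : ∀ᵐ ω ∂P, Zhat ω ≠ 0)
    (Q Z : ℝ) (hZ : Z ≠ 0)
    (K : ℝ) (hK : 0 ≤ K) (hbd : ∀ᵐ ω ∂P, |Qhat ω / Zhat ω| ≤ K) :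
    ∫⁻ ω, ENNReal.ofReal ((Q / Z - Qhat ω / Zhat ω) ^ 2) ∂P
      ≤ ENNReal.ofReal (2 / Z ^ 2 * max 1 (K ^ 2)) *
        (∫⁻ ω, ENNReal.ofReal ((Qhat ω - Q) ^ 2) ∂P
          + ∫⁻ ω, ENNReal.ofReal ((Zhat ω - Z) ^ 2) ∂P) :=
  statement9_general P Qhat Zhat hQm hZne Q Z hZ K hbd
end

section
/- Let (Ω, ℙ) be a probability space, let N ≥ 1, and let X_1, …, X_N be real random variables that all have the same distribution (they need not be independent). Let 1 ≤ r ≤ r̃ < ∞ and suppose E[|X_1|^{r̃}] < ∞. Then ( E[ max_{1 ≤ i ≤ N} |X_i|^r ] )^{1/r} ≤ N^{1/r̃} · ( E[|X_1|^{r̃}] )^{1/r̃}. -/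
/-!
Put `M = maxᵢ ‖Xᵢ‖`. On a probability space the `L^r` norm is monotone in `r`, so
`‖M‖_r ≤ ‖M‖_r̃`. Pointwise `M ^ r̃ ≤ ∑ᵢ ‖Xᵢ‖ ^ r̃`, and since the `Xᵢ` share one law each summand
has the same expectation `E ‖X₁‖ ^ r̃`; hence `E M ^ r̃ ≤ N · E ‖X₁‖ ^ r̃`.
-/

open MeasureTheory ProbabilityTheory
open scoped ENNReal

namespace ENNReal

theorem ofReal_iSup_of_finite {ι : Type*} [Finite ι] [Nonempty ι] (f : ι → ℝ) :
    ENNReal.ofReal (⨆ i, f i) = ⨆ i, ENNReal.ofReal (f i) :=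
  Monotone.map_ciSup_of_continuousAt ENNReal.continuous_ofReal.continuousAt ENNReal.ofReal_mono
    (Set.finite_range f).bddAbove

theorem iSup_rpow {ι : Sort*} (f : ι → ℝ≥0∞) {p : ℝ} (hp : 0 < p) :
    (⨆ i, f i) ^ p = ⨆ i, f i ^ p :=
  (orderIsoRpow p hp).map_iSup f

theorem iSup_rpow_le_sum {ι : Type*} [Fintype ι] (f : ι → ℝ≥0∞) {p : ℝ} (hp : 0 < p) :
    (⨆ i, f i) ^ p ≤ ∑ i, f i ^ p := by
  rw [iSup_rpow f hp]
  exact iSup_le fun i => Finset.single_le_sum (f := fun i => f i ^ p) (fun _ _ => zero_le)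
    (Finset.mem_univ i)

theorem ofReal_iSup_abs_rpow {ι : Type*} [Finite ι] [Nonempty ι] (x : ι → ℝ) {p : ℝ}
    (hp : 0 < p) : ENNReal.ofReal (⨆ i, |x i| ^ p) = (⨆ i, ‖x i‖ₑ) ^ p := by
  simp_rw [ofReal_iSup_of_finite, iSup_rpow _ hp, Real.enorm_eq_ofReal_abs,
    ENNReal.ofReal_rpow_of_nonneg (abs_nonneg _) hp.le]

end ENNReal

namespace MeasureTheory

variable {α : Type*} [MeasurableSpace α] {μ : Measure α}

theorem lintegral_rpow_one_div_le_of_le [IsProbabilityMeasure μ] {f : α → ℝ≥0∞}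
    (hf : AEMeasurable f μ) {p q : ℝ} (hp : 0 < p) (hpq : p ≤ q) :
    (∫⁻ a, f a ^ p ∂μ) ^ (1 / p) ≤ (∫⁻ a, f a ^ q ∂μ) ^ (1 / q) := by
  simpa only [eLpNorm', enorm_eq_self] using
    eLpNorm'_le_eLpNorm'_of_exponent_le hp hpq μ hf.aestronglyMeasurable

theorem lintegral_iSup_rpow_le_sum {ι : Type*} [Fintype ι] {f : ι → α → ℝ≥0∞}
    (hf : ∀ i, AEMeasurable (f i) μ) {p : ℝ} (hp : 0 < p) :
    ∫⁻ a, (⨆ i, f i a) ^ p ∂μ ≤ ∑ i, ∫⁻ a, f i a ^ p ∂μ := by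
  rw [← lintegral_finsetSum' _ fun i _ => (hf i).pow_const p]
  exact lintegral_mono fun a => ENNReal.iSup_rpow_le_sum (f · a) hp

end MeasureTheory

namespace ProbabilityTheory

variable {Ω E : Type*} [MeasurableSpace Ω] {μ : Measure Ω} [NormedAddCommGroup E]
  [MeasurableSpace E] [OpensMeasurableSpace E]

theorem lintegral_iSup_enorm_rpow_le_card_mul {ι : Type*} [Fintype ι] {X : ι → Ω → E} (j : ι)
    (hX : ∀ i, IdentDistrib (X i) (X j) μ μ) {p : ℝ} (hp : 0 < p) :
    ∫⁻ ω, (⨆ i, ‖X i ω‖ₑ) ^ p ∂μ ≤ Fintype.card ι * ∫⁻ ω, ‖X j ω‖ₑ ^ p ∂μ := by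
  have hmoment : ∀ i, ∫⁻ ω, ‖X i ω‖ₑ ^ p ∂μ = ∫⁻ ω, ‖X j ω‖ₑ ^ p ∂μ := fun i =>
    ((hX i).comp (measurable_enorm.pow_const p)).lintegral_eq
  calc ∫⁻ ω, (⨆ i, ‖X i ω‖ₑ) ^ p ∂μ ≤ ∑ i, ∫⁻ ω, ‖X i ω‖ₑ ^ p ∂μ :=
        lintegral_iSup_rpow_le_sum (fun i => (hX i).aemeasurable_fst.enorm) hp
    _ = Fintype.card ι * ∫⁻ ω, ‖X j ω‖ₑ ^ p ∂μ := by
        simp [hmoment]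

end ProbabilityTheory

theorem statement11_general {Ω : Type*} [MeasurableSpace Ω] (P : Measure Ω)
    [IsProbabilityMeasure P] (N : ℕ) (hN : 0 < N)
    (X : Fin N → Ω → ℝ) (hXm : ∀ i, Measurable (X i))
    (hid : ∀ i, P.map (X i) = P.map (X ⟨0, hN⟩))
    (r rt : ℝ) (hr : 1 ≤ r) (hrt : r ≤ rt) :
    (∫⁻ ω, ENNReal.ofReal (⨆ i, |X i ω| ^ r) ∂P) ^ (1 / r)
      ≤ (N : ENNReal) ^ (1 / rt)
        * (∫⁻ ω, ENNReal.ofReal (|X ⟨0, hN⟩ ω| ^ rt) ∂P) ^ (1 / rt) := by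
  have : Nonempty (Fin N) := ⟨⟨0, hN⟩⟩
  have hr0 : 0 < r := zero_lt_one.trans_le hr
  have hrt0 : 0 < rt := hr0.trans_le hrt
  have hident : ∀ i, IdentDistrib (X i) (X ⟨0, hN⟩) P P := fun i =>
    ⟨(hXm i).aemeasurable, (hXm _).aemeasurable, hid i⟩
  have hmax : AEMeasurable (fun ω => ⨆ i, ‖X i ω‖ₑ) P :=
    (Measurable.iSup fun i => (hXm i).enorm).aemeasurable
  calc (∫⁻ ω, ENNReal.ofReal (⨆ i, |X i ω| ^ r) ∂P) ^ (1 / r)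
      = (∫⁻ ω, (⨆ i, ‖X i ω‖ₑ) ^ r ∂P) ^ (1 / r) := by
        simp_rw [ENNReal.ofReal_iSup_abs_rpow _ hr0]
    _ ≤ (∫⁻ ω, (⨆ i, ‖X i ω‖ₑ) ^ rt ∂P) ^ (1 / rt) :=
        lintegral_rpow_one_div_le_of_le hmax hr0 hrt
    _ ≤ (N * ∫⁻ ω, ‖X ⟨0, hN⟩ ω‖ₑ ^ rt ∂P) ^ (1 / rt) := by
        gcongr
        simpa using lintegral_iSup_enorm_rpow_le_card_mul _ hident hrt0
    _ = (N : ENNReal) ^ (1 / rt)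
        * (∫⁻ ω, ENNReal.ofReal (|X ⟨0, hN⟩ ω| ^ rt) ∂P) ^ (1 / rt) := by
        simp_rw [ENNReal.mul_rpow_of_nonneg _ _ (one_div_pos.2 hrt0).le,
          Real.enorm_eq_ofReal_abs, ENNReal.ofReal_rpow_of_nonneg (abs_nonneg _) hrt0.le]

/-- Moment bound for the maximum of identically distributed random variables:
if `X_1, …, X_N` are identically distributed (not necessarily independent) and
`1 ≤ r ≤ r̃ < ∞` with `E[|X_1|^r̃] < ∞`, then
`(E[max_i |X_i|^r])^{1/r} ≤ N^{1/r̃} (E[|X_1|^r̃])^{1/r̃}`. -/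
theorem statement11 {Ω : Type*} [MeasurableSpace Ω] (P : Measure Ω)
    [IsProbabilityMeasure P] (N : ℕ) (hN : 0 < N)
    (X : Fin N → Ω → ℝ) (hXm : ∀ i, Measurable (X i))
    (hid : ∀ i, P.map (X i) = P.map (X ⟨0, hN⟩))
    (r rt : ℝ) (hr : 1 ≤ r) (hrt : r ≤ rt)
    (hfin : ∫⁻ ω, ENNReal.ofReal (|X ⟨0, hN⟩ ω| ^ rt) ∂P < ⊤) :
    (∫⁻ ω, ENNReal.ofReal (⨆ i, |X i ω| ^ r) ∂P) ^ (1 / r)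
      ≤ (N : ENNReal) ^ (1 / rt)
        * (∫⁻ ω, ENNReal.ofReal (|X ⟨0, hN⟩ ω| ^ rt) ∂P) ^ (1 / rt) :=
  statement11_general P N hN X hXm hid r rt hr hrt
end

section
/- Let (Ω, ℙ) be a probability space and let X_1, …, X_N (N ≥ 1) be real random variables that all have the same distribution (they need not be independent). Suppose there is a constant B ≥ 0 such that (E[|X_1|^q])^{1/q} ≤ B for every q ∈ [1, ∞). Then for every r ∈ [1, ∞), ( E[ max_{1 ≤ i ≤ N} |X_i|^r ] )^{1/r} ≤ e · B, where e is Euler's number; in particular the L^r norm of the maximum is bounded independently of N. -/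
open MeasureTheory
open scoped ENNReal

/-- If all `L^q` norms (`1 ≤ q < ∞`) of identically distributed random
variables `X_1, …, X_N` are bounded by the same constant `B`, then for every
`r ∈ [1, ∞)`, `(E[max_i |X_i|^r])^{1/r} ≤ e·B`, independently of `N`. -/
theorem statement12 {Ω : Type*} [MeasurableSpace Ω] (P : Measure Ω)
    [IsProbabilityMeasure P] (N : ℕ) (hN : 0 < N)
    (X : Fin N → Ω → ℝ) (hXm : ∀ i, Measurable (X i))
    (hid : ∀ i, P.map (X i) = P.map (X ⟨0, hN⟩))
    (B : ℝ) (hB0 : 0 ≤ B)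
    (hB : ∀ q : ℝ, 1 ≤ q →
      (∫⁻ ω, ENNReal.ofReal (|X ⟨0, hN⟩ ω| ^ q) ∂P) ^ (1 / q)
        ≤ ENNReal.ofReal B) :
    ∀ r : ℝ, 1 ≤ r →
      (∫⁻ ω, ENNReal.ofReal (⨆ i, |X i ω| ^ r) ∂P) ^ (1 / r)
        ≤ ENNReal.ofReal (Real.exp 1 * B) := by
  intro r hr
  haveI : Nonempty (Fin N) := ⟨⟨0, hN⟩⟩
  set f : Ω → ℝ := fun ω => ⨆ i, |X i ω| with hf_def
  have hf0 : ∀ ω, 0 ≤ f ω := fun ω =>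
    le_ciSup_of_le (Set.Finite.bddAbove (Set.finite_range _)) ⟨0, hN⟩ (abs_nonneg _)
  have hfm : Measurable f := Measurable.iSup fun i => (hXm i).abs
  -- sup of powers equals power of sup
  have key : ∀ (t : ℝ), 0 ≤ t → ∀ ω, (⨆ i, |X i ω| ^ t) = (f ω) ^ t := by
    intro t ht ω
    apply le_antisymm
    · exact ciSup_le fun i => Real.rpow_le_rpow (abs_nonneg _)
        (le_ciSup (f := fun j => |X j ω|) (Set.Finite.bddAbove (Set.finite_range _)) i) ht
    · obtain ⟨i, hi⟩ := Finite.exists_max fun i => |X i ω|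
      have : f ω ≤ |X i ω| := ciSup_le hi
      exact le_trans (Real.rpow_le_rpow (hf0 ω) this ht)
        (le_ciSup (f := fun j => |X j ω| ^ t) (Set.Finite.bddAbove (Set.finite_range _)) i)
  have eLp_eq : ∀ (t : ℝ), 0 ≤ t →
      eLpNorm' f t P = (∫⁻ ω, ENNReal.ofReal (⨆ i, |X i ω| ^ t) ∂P) ^ (1 / t) := by
    intro t ht
    rw [eLpNorm']
    congr 1
    apply lintegral_congr fun ω => ?_
    rw [key t ht ω, ← ENNReal.ofReal_rpow_of_nonneg (hf0 ω) ht,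
      Real.enorm_eq_ofReal (hf0 ω)]
  set s : ℝ := max r (Real.log N) with hs_def
  have hrs : r ≤ s := le_max_left _ _
  have hs1 : 1 ≤ s := le_trans hr hrs
  have hs0 : 0 < s := lt_of_lt_of_le one_pos hs1
  have hr0 : 0 < r := lt_of_lt_of_le one_pos hr
  rw [← eLp_eq r hr0.le]
  calc eLpNorm' f r P ≤ eLpNorm' f s P :=
        eLpNorm'_le_eLpNorm'_of_exponent_le hr0 hrs P hfm.aestronglyMeasurable
    _ ≤ ENNReal.ofReal (Real.exp 1 * B) := by
        rw [eLp_eq s hs0.le]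
        -- bound the integral
        have hgm : ∀ i : Fin N, Measurable fun ω => ENNReal.ofReal (|X i ω| ^ s) :=
          fun i => ENNReal.measurable_ofReal.comp ((hXm i).abs.pow_const s)
        have step1 : (∫⁻ ω, ENNReal.ofReal (⨆ i, |X i ω| ^ s) ∂P)
            ≤ ∑ i : Fin N, ∫⁻ ω, ENNReal.ofReal (|X i ω| ^ s) ∂P := by
          rw [← lintegral_finset_sum _ fun i _ => hgm i]
          apply lintegral_mono fun ω => ?_
          calc ENNReal.ofReal (⨆ i, |X i ω| ^ s)
              ≤ ENNReal.ofReal (∑ i : Fin N, |X i ω| ^ s) := by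
                apply ENNReal.ofReal_le_ofReal
                exact ciSup_le fun i => Finset.single_le_sum
                  (f := fun j => |X j ω| ^ s)
                  (fun j _ => Real.rpow_nonneg (abs_nonneg _) s) (Finset.mem_univ i)
            _ = ∑ i : Fin N, ENNReal.ofReal (|X i ω| ^ s) :=
                ENNReal.ofReal_sum_of_nonneg fun j _ => Real.rpow_nonneg (abs_nonneg _) s
        have step2 : ∀ i : Fin N, (∫⁻ ω, ENNReal.ofReal (|X i ω| ^ s) ∂P)
            = ∫⁻ ω, ENNReal.ofReal (|X ⟨0, hN⟩ ω| ^ s) ∂P := by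
          intro i
          have hg : Measurable fun x : ℝ => ENNReal.ofReal (|x| ^ s) :=
            ENNReal.measurable_ofReal.comp (measurable_abs.pow_const s)
          rw [← lintegral_map hg (hXm i), hid i, lintegral_map hg (hXm ⟨0, hN⟩)]
        have step3 : (∫⁻ ω, ENNReal.ofReal (|X ⟨0, hN⟩ ω| ^ s) ∂P)
            ≤ (ENNReal.ofReal B) ^ s := by
          have := ENNReal.rpow_le_rpow (hB s hs1) hs0.le
          rwa [← ENNReal.rpow_mul, one_div,
            inv_mul_cancel₀ hs0.ne', ENNReal.rpow_one] at this
        have step4 : (∫⁻ ω, ENNReal.ofReal (⨆ i, |X i ω| ^ s) ∂P)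
            ≤ (N : ℝ≥0∞) * (ENNReal.ofReal B) ^ s := by
          refine step1.trans ?_
          calc ∑ i : Fin N, ∫⁻ ω, ENNReal.ofReal (|X i ω| ^ s) ∂P
              = ∑ _i : Fin N, ∫⁻ ω, ENNReal.ofReal (|X ⟨0, hN⟩ ω| ^ s) ∂P := by
                exact Finset.sum_congr rfl fun i _ => step2 i
            _ = (N : ℝ≥0∞) * ∫⁻ ω, ENNReal.ofReal (|X ⟨0, hN⟩ ω| ^ s) ∂P := by
                simp [Finset.sum_const, nsmul_eq_mul]
            _ ≤ (N : ℝ≥0∞) * (ENNReal.ofReal B) ^ s :=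
                mul_le_mul_right step3 _
        calc (∫⁻ ω, ENNReal.ofReal (⨆ i, |X i ω| ^ s) ∂P) ^ (1 / s)
            ≤ ((N : ℝ≥0∞) * (ENNReal.ofReal B) ^ s) ^ (1 / s) :=
              ENNReal.rpow_le_rpow step4 (by positivity)
          _ = (N : ℝ≥0∞) ^ (1 / s) * ENNReal.ofReal B := by
              rw [ENNReal.mul_rpow_of_nonneg _ _ (by positivity), ← ENNReal.rpow_mul,
                mul_one_div, div_self hs0.ne', ENNReal.rpow_one]
          _ ≤ ENNReal.ofReal (Real.exp 1) * ENNReal.ofReal B := by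
              apply mul_le_mul_left
              have hNpos : (0 : ℝ) < N := Nat.cast_pos.mpr hN
              rw [← ENNReal.ofReal_natCast, ENNReal.ofReal_rpow_of_pos hNpos]
              apply ENNReal.ofReal_le_ofReal
              rw [Real.rpow_def_of_pos hNpos]
              apply Real.exp_le_exp.mpr
              rw [mul_one_div, div_le_one hs0]
              exact le_max_right _ _
          _ = ENNReal.ofReal (Real.exp 1 * B) :=
              (ENNReal.ofReal_mul (Real.exp_pos 1).le).symm
end

section
/- Let s, γ, C1, C2, C3 > 0 and δ ∈ (1/2, 1] be real constants. Then there exists a constant C > 0 such that for every ε ∈ (0, 1) there exist a positive integer N and a real number h ∈ (0, 1] with C1 · N^{−1/δ} + C2 · h^{4s} ≤ ε² and N · C3 · h^{−γ} ≤ C · ε^{−2δ − γ/(2s)}. (This is the abstract computational-complexity bound for the quasi-Monte Carlo ratio estimator: a mean square error bounded by C1 N^{−1/δ} + C2 h^{4s} can be made at most ε² at total cost of order ε^{−2δ−γ/(2s)}.) -/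
/-- Complexity of the quasi-Monte Carlo ratio estimator: a mean square error
bounded by `C1 N^{−1/δ} + C2 h^{4s}` can be made at most `ε²` with total cost
`N·C3·h^{−γ}` of order `ε^{−2δ−γ/(2s)}`. -/
theorem statement16 (s γ C1 C2 C3 δ : ℝ)
    (hs : 0 < s) (hγ : 0 < γ) (hC1 : 0 < C1) (hC2 : 0 < C2) (hC3 : 0 < C3)
    (hδ1 : 1 / 2 < δ) (hδ2 : δ ≤ 1) :
    ∃ C : ℝ, 0 < C ∧ ∀ ε : ℝ, 0 < ε → ε < 1 →
      ∃ (N : ℕ) (h : ℝ), 0 < N ∧ 0 < h ∧ h ≤ 1 ∧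
        C1 * (N : ℝ) ^ (-(1 / δ)) + C2 * h ^ (4 * s) ≤ ε ^ 2 ∧
        (N : ℝ) * C3 * h ^ (-γ) ≤ C * ε ^ (-(2 * δ) - γ / (2 * s)) := by
  have hδ0 : 0 < δ := lt_trans (by norm_num) hδ1
  set K : ℝ := max 1 ((2 * C2) ^ (γ / (4 * s))) with hK
  have hK1 : (1 : ℝ) ≤ K := le_max_left _ _
  have hK0 : 0 < K := lt_of_lt_of_le one_pos hK1
  refine ⟨((2 * C1) ^ δ + 1) * C3 * K, by positivity, ?_⟩
  intro ε hε hε1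
  have hε2 : (0 : ℝ) < ε ^ 2 := by positivity
  set a : ℝ := (ε ^ 2 / (2 * C2)) ^ (1 / (4 * s)) with ha
  have ha0 : 0 < a := Real.rpow_pos_of_pos (by positivity) _
  set x : ℝ := (2 * C1 / ε ^ 2) ^ δ with hx
  have hx0 : 0 < x := Real.rpow_pos_of_pos (by positivity) _
  refine ⟨⌈x⌉₊, min 1 a, Nat.ceil_pos.mpr hx0, lt_min one_pos ha0, min_le_left _ _, ?_, ?_⟩
  · -- error bound
    have hNx : x ≤ (⌈x⌉₊ : ℝ) := Nat.le_ceil x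
    have h1 : ((⌈x⌉₊ : ℝ)) ^ (-(1 / δ)) ≤ x ^ (-(1 / δ)) :=
      Real.rpow_le_rpow_of_nonpos hx0 hNx (neg_nonpos.mpr (by positivity))
    have hxe : x ^ (-(1 / δ)) = ε ^ 2 / (2 * C1) := by
      rw [hx, ← Real.rpow_mul (by positivity), mul_neg, mul_one_div, div_self hδ0.ne',
        Real.rpow_neg_one, inv_div]
    have h2 : (min 1 a) ^ (4 * s) ≤ ε ^ 2 / (2 * C2) := by
      have : (min 1 a) ^ (4 * s) ≤ a ^ (4 * s) :=
        Real.rpow_le_rpow (le_min zero_le_one ha0.le) (min_le_right _ _) (by positivity)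
      refine this.trans_eq ?_
      rw [ha, ← Real.rpow_mul (by positivity), one_div,
        inv_mul_cancel₀ (by positivity), Real.rpow_one]
    calc C1 * (⌈x⌉₊ : ℝ) ^ (-(1 / δ)) + C2 * (min 1 a) ^ (4 * s)
        ≤ C1 * (ε ^ 2 / (2 * C1)) + C2 * (ε ^ 2 / (2 * C2)) := by
          gcongr
          exact h1.trans_eq hxe
      _ = ε ^ 2 := by field_simp; ring
  · -- cost bound
    have hεpow1 : (1 : ℝ) ≤ ε ^ (-(2 * δ)) :=
      Real.one_le_rpow_of_pos_of_le_one_of_nonpos hε hε1.le (neg_nonpos.mpr (by positivity))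
    have hεpow2 : (1 : ℝ) ≤ ε ^ (-(γ / (2 * s))) :=
      Real.one_le_rpow_of_pos_of_le_one_of_nonpos hε hε1.le (neg_nonpos.mpr (by positivity))
    have hxval : x = (2 * C1) ^ δ * ε ^ (-(2 * δ)) := by
      rw [hx, Real.div_rpow (by positivity) (by positivity), ← Real.rpow_natCast ε 2,
        ← Real.rpow_mul hε.le, div_eq_mul_inv, ← Real.rpow_neg hε.le]
      norm_num
    have hN : (⌈x⌉₊ : ℝ) ≤ ((2 * C1) ^ δ + 1) * ε ^ (-(2 * δ)) := by
      have := (Nat.ceil_lt_add_one hx0.le).le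
      calc (⌈x⌉₊ : ℝ) ≤ x + 1 := this
        _ ≤ (2 * C1) ^ δ * ε ^ (-(2 * δ)) + 1 * ε ^ (-(2 * δ)) := by
            rw [hxval, one_mul]; linarith
        _ = ((2 * C1) ^ δ + 1) * ε ^ (-(2 * δ)) := by ring
    have hh : (min 1 a) ^ (-γ) ≤ K * ε ^ (-(γ / (2 * s))) := by
      have haval : a ^ (-γ) = (2 * C2) ^ (γ / (4 * s)) * ε ^ (-(γ / (2 * s))) := by
        rw [ha, ← Real.rpow_mul (by positivity)]
        rw [show 1 / (4 * s) * (-γ) = -(γ / (4 * s)) by field_simp]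
        rw [Real.rpow_neg (by positivity), ← Real.inv_rpow (by positivity), inv_div,
          Real.div_rpow (by positivity) (by positivity), ← Real.rpow_natCast ε 2,
          ← Real.rpow_mul hε.le, div_eq_mul_inv, ← Real.rpow_neg hε.le]
        rw [show -((2 : ℕ) * (γ / (4 * s))) = -(γ / (2 * s)) by push_cast; field_simp; ring]
      rcases min_cases 1 a with ⟨he, _⟩ | ⟨he, _⟩
      · rw [he, Real.one_rpow]
        calc (1 : ℝ) ≤ K * 1 := by linarith
          _ ≤ K * ε ^ (-(γ / (2 * s))) := by gcongr
      · rw [he, haval]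
        gcongr
        exact le_max_right _ _
    calc (⌈x⌉₊ : ℝ) * C3 * (min 1 a) ^ (-γ)
        ≤ (((2 * C1) ^ δ + 1) * ε ^ (-(2 * δ))) * C3 * (K * ε ^ (-(γ / (2 * s)))) := by
          have h0 : (0 : ℝ) ≤ (min 1 a) ^ (-γ) :=
            Real.rpow_nonneg (le_min zero_le_one ha0.le) _
          gcongr
      _ = ((2 * C1) ^ δ + 1) * C3 * K * (ε ^ (-(2 * δ)) * ε ^ (-(γ / (2 * s)))) := by ring
      _ = ((2 * C1) ^ δ + 1) * C3 * K * ε ^ (-(2 * δ) - γ / (2 * s)) := by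
          rw [← Real.rpow_add hε]; ring_nf
end

section
/- Let s, γ, C_b, C_v, C_c > 0 be real constants and let h_ℓ = 2^{−ℓ} for ℓ ∈ ℕ. Then there exists a constant C > 0 such that for every ε ∈ (0, e^{−1}) there exist L ∈ ℕ and positive integers N_0, …, N_L with C_b · h_L^{4s} + Σ_{ℓ=0}^L C_v · h_ℓ^{4s} / N_ℓ ≤ ε², and with total cost Σ_{ℓ=0}^L N_ℓ · C_c · h_ℓ^{−γ} bounded by: C · ε^{−2} if 4s > γ; C · ε^{−2} (log ε)² if 4s = γ; and C · ε^{−γ/(2s)} if 4s < γ. (This is the abstract multilevel Monte Carlo complexity theorem for the ratio estimator: a mean square error consisting of a squared bias term C_b h_L^{4s} plus the multilevel variance Σ_ℓ C_v h_ℓ^{4s}/N_ℓ can be made at most ε² at the stated cost.) -/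
/-!
Choose the finest level `L` so that the squared bias `C_b 2^{-4sL}` is at most `ε²/2` while still
`2^{4sL} = O(ε⁻²)`, hence `L = O(|log ε|)`. The remaining `ε²/2` of variance is
distributed over the levels by the classical optimal allocation `N_ℓ ∝ √(V_ℓ / C_ℓ)`, where
`V_ℓ = C_v 2^{-4sℓ}` and `C_ℓ = C_c 2^{γℓ}`; after rounding up, the cost is at most
`2 ε⁻² (∑_ℓ √(V_ℓ C_ℓ))² + ∑_ℓ C_ℓ`, with `√(V_ℓ C_ℓ) ∝ 2^{(γ - 4s)ℓ/2}`. The three regimes are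
those of this geometric sum: it is bounded if `γ < 4s`, equals `L + 1 = O(|log ε|)` if `γ = 4s`,
and is dominated by its last term `2^{(γ - 4s)L/2}` if `γ > 4s`.
-/

open Real Finset

theorem exists_sampleSizes_variance_le_and_cost_le {ι : Type*} (s : Finset ι) {v c : ι → ℝ}
    (hv : ∀ i ∈ s, 0 < v i) (hc : ∀ i ∈ s, 0 < c i) {δ : ℝ} (hδ : 0 < δ) :
    ∃ N : ι → ℕ, (∀ i ∈ s, 0 < N i) ∧ ∑ i ∈ s, v i / N i ≤ δ ∧
      ∑ i ∈ s, N i * c i ≤ (∑ i ∈ s, √(v i * c i)) ^ 2 / δ + ∑ i ∈ s, c i := by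
  rcases s.eq_empty_or_nonempty with rfl | ⟨i₀, hi₀⟩
  · exact ⟨fun _ => 1, by simp, by simpa using hδ.le, by simp⟩
  set S := ∑ i ∈ s, √(v i * c i)
  have hvc : ∀ i ∈ s, 0 < √(v i * c i) := fun i hi => sqrt_pos.2 (mul_pos (hv i hi) (hc i hi))
  have hS : 0 < S := (hvc i₀ hi₀).trans_le
    (single_le_sum (f := fun j => √(v j * c j)) (fun j _ => sqrt_nonneg _) hi₀)
  -- the optimal allocation `N i ∝ √(v i / c i)`, scaled so that the variance is exactly `δ`
  set M : ι → ℝ := fun i => √(v i * c i) / c i * S / δ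
  have hM : ∀ i ∈ s, 0 < M i := fun i hi => by
    have := hvc i hi; have := hc i hi; positivity
  refine ⟨fun i => ⌈M i⌉₊, fun i hi => Nat.ceil_pos.2 (hM i hi), ?_, ?_⟩
  · calc ∑ i ∈ s, v i / ⌈M i⌉₊ ≤ ∑ i ∈ s, δ / S * √(v i * c i) := by
          refine sum_le_sum fun i hi => ?_
          calc v i / ⌈M i⌉₊ ≤ v i / M i :=
                div_le_div_of_nonneg_left (hv i hi).le (hM i hi) (Nat.le_ceil _)
            _ = δ / S * (v i * c i / √(v i * c i)) := by
                have := hvc i hi; have := hc i hi; simp only [M]; field_simp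
            _ = δ / S * √(v i * c i) := by rw [div_sqrt]
      _ = δ := by rw [← mul_sum, div_mul_cancel₀ _ hS.ne']
  · calc ∑ i ∈ s, (⌈M i⌉₊ : ℝ) * c i ≤ ∑ i ∈ s, (M i + 1) * c i :=
          sum_le_sum fun i hi => mul_le_mul_of_nonneg_right
            (Nat.ceil_lt_add_one (hM i hi).le).le (hc i hi).le
      _ = ∑ i ∈ s, (S / δ * √(v i * c i) + c i) := sum_congr rfl fun i hi => by
          have := hc i hi; simp only [M]; field_simp
      _ = S ^ 2 / δ + ∑ i ∈ s, c i := by rw [sum_add_distrib, ← mul_sum]; ring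

theorem geom_sum_range_le_of_lt_one {x : ℝ} (hx₀ : 0 ≤ x) (hx₁ : x < 1) (n : ℕ) :
    ∑ i ∈ range n, x ^ i ≤ (1 - x)⁻¹ := by
  rw [range_eq_Ico]
  simpa using geom_sum_Ico_le_of_lt_one (m := 0) (n := n) hx₀ hx₁

theorem geom_sum_range_succ_le_of_one_lt {x : ℝ} (hx : 1 < x) (n : ℕ) :
    ∑ i ∈ range (n + 1), x ^ i ≤ x ^ n * (x / (x - 1)) := by
  rw [geom_sum_eq hx.ne', mul_div_assoc', ← pow_succ]
  exact div_le_div_of_nonneg_right (by linarith) (by linarith)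

theorem rpow_neg_two_eq_inv_sq (ε : ℝ) : ε ^ (-2 : ℝ) = (ε ^ 2)⁻¹ := by
  rw [rpow_neg_ofNat, zpow_neg, zpow_ofNat]

theorem rpow_neg_natCast_rpow {x : ℝ} (hx : 0 ≤ x) (ℓ : ℕ) (r : ℝ) :
    (x ^ (-(ℓ : ℝ))) ^ r = (x ^ (-r)) ^ ℓ := by
  rw [← rpow_natCast, ← rpow_mul hx, ← rpow_mul hx]
  ring_nf

theorem pow_le_rpow_div_of_pow_le {x a r B : ℝ} {L : ℕ} (hx : 0 ≤ x) (ha : 0 < a) (hr : 0 ≤ r)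
    (h : (x ^ a) ^ L ≤ B) : (x ^ r) ^ L ≤ B ^ (r / a) := by
  have hxaL : (x ^ r) ^ L = ((x ^ a) ^ L) ^ (r / a) := by
    rw [← rpow_natCast, ← rpow_natCast, ← rpow_mul hx, ← rpow_mul hx, ← rpow_mul hx]
    congr 1; field_simp
  rw [hxaL]
  exact rpow_le_rpow (by positivity) h (div_nonneg hr ha.le)

theorem div_sq_rpow {D ε : ℝ} (hD : 0 ≤ D) (hε : 0 < ε) (t : ℝ) :
    (D / ε ^ 2) ^ t = D ^ t * ε ^ (-(2 * t)) := by
  rw [div_rpow hD (by positivity), ← rpow_natCast, ← rpow_mul hε.le, rpow_neg hε.le,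
    div_eq_mul_inv]
  norm_num

theorem natCast_add_one_le_of_pow_le {q D ε : ℝ} {L : ℕ} (hq : 1 < q) (hD : 1 ≤ D)
    (hε : 0 < ε) (hεe : ε < exp (-1)) (hL : q ^ L ≤ D / ε ^ 2) :
    (L : ℝ) + 1 ≤ ((log D + 2) / log q + 1) * (-log ε) := by
  have hlogq : 0 < log q := log_pos hq
  have hlogε : 1 < -log ε := by
    have := log_lt_log hε hεe
    rw [log_exp] at this; linarith
  have hlogD : 0 ≤ log D := log_nonneg hD
  have hLlog : L * log q ≤ log D + 2 * (-log ε) := by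
    have := log_le_log (by positivity) hL
    rw [log_pow, log_div (by positivity) (by positivity), log_pow] at this
    push_cast at this; linarith
  have hLle : (L : ℝ) ≤ (log D + 2) / log q * (-log ε) := by
    rw [div_mul_eq_mul_div, le_div_iff₀ hlogq]
    nlinarith
  nlinarith

theorem sqrt_two_rpow_neg_natCast_mul (ℓ : ℕ) (a γ : ℝ) :
    √(((2 : ℝ) ^ (-(ℓ : ℝ))) ^ a * ((2 : ℝ) ^ (-(ℓ : ℝ))) ^ (-γ))
      = ((2 : ℝ) ^ ((γ - a) / 2)) ^ ℓ := by
  rw [← rpow_add (by positivity), sqrt_eq_rpow, ← rpow_mul (by positivity),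
    rpow_neg_natCast_rpow zero_le_two]
  ring_nf

theorem exists_level_bias_le {a B δ : ℝ} (ha : 0 < a) (hB : 0 ≤ B) (hδ : 0 < δ)
    (hδ₁ : δ ≤ 1) :
    ∃ L : ℕ, B * ((2 : ℝ) ^ (-(L : ℝ))) ^ a ≤ δ ∧ ((2 : ℝ) ^ a) ^ L ≤ 2 ^ a * (1 + B) / δ := by
  have hT : max 1 (B / δ) ≤ (1 + B) / δ :=
    max_le (by rw [le_div_iff₀ hδ]; linarith) (by gcongr; linarith)
  obtain ⟨n, hle, hlt⟩ := exists_nat_pow_near (le_max_left 1 (B / δ)) (one_lt_rpow one_lt_two ha)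
  refine ⟨n + 1, ?_, ?_⟩
  · have hBδ : B / δ ≤ ((2 : ℝ) ^ a) ^ (n + 1) := (le_max_right _ _).trans hlt.le
    rw [rpow_neg_natCast_rpow zero_le_two, rpow_neg zero_le_two, inv_pow, ← div_eq_mul_inv,
      div_le_iff₀ (by positivity)]
    rwa [div_le_iff₀ hδ, mul_comm] at hBδ
  · rw [pow_succ', mul_div_assoc]
    gcongr
    exact hle.trans hT

/-- The cost bound of `exists_sampleSizes_variance_le_and_cost_le` for the target variance `ε²/2`,
`V_ℓ = C_v 2^{-aℓ}` and `C_ℓ = C_c 2^{γℓ}`, for which `√(V_ℓ C_ℓ) = √(C_v C_c) 2^{(γ - a)ℓ/2}`. -/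
noncomputable def mlmcCostBound (a γ Cv Cc ε : ℝ) (L : ℕ) : ℝ :=
  2 * Cv * Cc / ε ^ 2 * (∑ ℓ ∈ range (L + 1), ((2 : ℝ) ^ ((γ - a) / 2)) ^ ℓ) ^ 2
    + Cc * ∑ ℓ ∈ range (L + 1), ((2 : ℝ) ^ γ) ^ ℓ

theorem exists_levels_samples {a γ Cb Cv Cc ε : ℝ} (ha : 0 < a) (hCb : 0 < Cb)
    (hCv : 0 < Cv) (hCc : 0 < Cc) (hε : 0 < ε) (hε₁ : ε ≤ 1) :
    ∃ (L : ℕ) (N : ℕ → ℕ), (∀ ℓ ≤ L, 0 < N ℓ) ∧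
      Cb * ((2 : ℝ) ^ (-(L : ℝ))) ^ a
          + ∑ ℓ ∈ range (L + 1), Cv * ((2 : ℝ) ^ (-(ℓ : ℝ))) ^ a / N ℓ ≤ ε ^ 2 ∧
      ∑ ℓ ∈ range (L + 1), (N ℓ : ℝ) * Cc * ((2 : ℝ) ^ (-(ℓ : ℝ))) ^ (-γ)
          ≤ mlmcCostBound a γ Cv Cc ε L ∧
      ((2 : ℝ) ^ a) ^ L ≤ 2 * 2 ^ a * (1 + Cb) / ε ^ 2 := by
  have hδ : 0 < ε ^ 2 / 2 := by positivity
  obtain ⟨L, hbias, hL⟩ := exists_level_bias_le ha hCb.le hδ (by nlinarith)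
  obtain ⟨N, hN, hvar, hcost⟩ := exists_sampleSizes_variance_le_and_cost_le (range (L + 1))
    (v := fun ℓ => Cv * ((2 : ℝ) ^ (-(ℓ : ℝ))) ^ a)
    (c := fun ℓ => Cc * ((2 : ℝ) ^ (-(ℓ : ℝ))) ^ (-γ))
    (fun ℓ _ => by positivity) (fun ℓ _ => by positivity) hδ
  have hsqrt : ∀ ℓ : ℕ, √(Cv * ((2 : ℝ) ^ (-(ℓ : ℝ))) ^ a * (Cc * ((2 : ℝ) ^ (-(ℓ : ℝ))) ^ (-γ)))
      = √(Cv * Cc) * ((2 : ℝ) ^ ((γ - a) / 2)) ^ ℓ := fun ℓ => by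
    rw [mul_mul_mul_comm, sqrt_mul (by positivity), sqrt_two_rpow_neg_natCast_mul]
  refine ⟨L, N, fun ℓ hℓ => hN ℓ (mem_range.2 (by omega)), by linarith, ?_, ?_⟩
  · calc ∑ ℓ ∈ range (L + 1), (N ℓ : ℝ) * Cc * ((2 : ℝ) ^ (-(ℓ : ℝ))) ^ (-γ)
        = ∑ ℓ ∈ range (L + 1), (N ℓ : ℝ) * (Cc * ((2 : ℝ) ^ (-(ℓ : ℝ))) ^ (-γ)) := by
          simp only [mul_assoc]
      _ ≤ _ := hcost
      _ = mlmcCostBound a γ Cv Cc ε L := by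
          simp only [hsqrt, ← mul_sum]
          simp only [rpow_neg_natCast_rpow zero_le_two, neg_neg]
          rw [mul_pow, sq_sqrt (by positivity), mlmcCostBound]
          field_simp
  · calc ((2 : ℝ) ^ a) ^ L ≤ 2 ^ a * (1 + Cb) / (ε ^ 2 / 2) := hL
      _ = 2 * 2 ^ a * (1 + Cb) / ε ^ 2 := by field_simp

theorem mlmcCostBound_le_of_lt {a γ Cv Cc D : ℝ} (hγ : 0 < γ) (hγa : γ < a) (hCv : 0 < Cv)
    (hCc : 0 < Cc) (hD : 0 ≤ D) :
    ∃ K, 0 < K ∧ ∀ (ε : ℝ) (L : ℕ), 0 < ε → ((2 : ℝ) ^ a) ^ L ≤ D / ε ^ 2 →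
      mlmcCostBound a γ Cv Cc ε L ≤ K * ε ^ (-2 : ℝ) := by
  set ρ := (2 : ℝ) ^ ((γ - a) / 2)
  have hρ : ρ < 1 := rpow_lt_one_of_one_lt_of_neg one_lt_two (by linarith)
  have hq : 1 < (2 : ℝ) ^ γ := one_lt_rpow one_lt_two hγ
  refine ⟨2 * Cv * Cc * ((1 - ρ)⁻¹) ^ 2 + Cc * (D * (2 ^ γ / (2 ^ γ - 1))), by
    have : 0 < 1 - ρ := by linarith
    have : 0 < (2 : ℝ) ^ γ - 1 := by linarith
    positivity, fun ε L hε hL => ?_⟩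
  have hγL : ((2 : ℝ) ^ γ) ^ L ≤ D / ε ^ 2 :=
    (pow_le_pow_left₀ (by positivity) (rpow_le_rpow_of_exponent_le one_le_two hγa.le) L).trans hL
  calc mlmcCostBound a γ Cv Cc ε L
      ≤ 2 * Cv * Cc / ε ^ 2 * ((1 - ρ)⁻¹) ^ 2
          + Cc * (((2 : ℝ) ^ γ) ^ L * (2 ^ γ / (2 ^ γ - 1))) := by
        unfold mlmcCostBound
        gcongr
        · exact geom_sum_range_le_of_lt_one (by positivity) hρ _
        · exact geom_sum_range_succ_le_of_one_lt hq L
    _ ≤ 2 * Cv * Cc / ε ^ 2 * ((1 - ρ)⁻¹) ^ 2 + Cc * (D / ε ^ 2 * (2 ^ γ / (2 ^ γ - 1))) := by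
        gcongr
    _ = _ := by rw [rpow_neg_two_eq_inv_sq]; ring

theorem mlmcCostBound_le_of_eq {a Cv Cc D : ℝ} (ha : 0 < a) (hCv : 0 < Cv) (hCc : 0 < Cc)
    (hD : 1 ≤ D) :
    ∃ K, 0 < K ∧ ∀ (ε : ℝ) (L : ℕ), 0 < ε → ε < exp (-1) → ((2 : ℝ) ^ a) ^ L ≤ D / ε ^ 2 →
      mlmcCostBound a a Cv Cc ε L ≤ K * ε ^ (-2 : ℝ) * log ε ^ 2 := by
  have hq : 1 < (2 : ℝ) ^ a := one_lt_rpow one_lt_two ha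
  set E := (log D + 2) / log (2 ^ a) + 1
  have hE : 0 < E := by
    have := log_nonneg hD; have := log_pos hq; positivity
  refine ⟨2 * Cv * Cc * E ^ 2 + Cc * (D * (2 ^ a / (2 ^ a - 1))), by
    have : 0 < (2 : ℝ) ^ a - 1 := by linarith
    positivity, fun ε L hε hεe hL => ?_⟩
  have hlog : 1 ≤ log ε ^ 2 := by
    have := log_lt_log hε hεe
    rw [log_exp] at this; nlinarith
  have hLE : ((L : ℝ) + 1) ^ 2 ≤ E ^ 2 * log ε ^ 2 := by
    rw [← neg_sq (log ε), ← mul_pow]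
    exact pow_le_pow_left₀ (by positivity) (natCast_add_one_le_of_pow_le hq hD hε hεe hL) 2
  calc mlmcCostBound a a Cv Cc ε L
      = 2 * Cv * Cc / ε ^ 2 * ((L : ℝ) + 1) ^ 2 + Cc * ∑ ℓ ∈ range (L + 1), ((2 : ℝ) ^ a) ^ ℓ := by
        simp [mlmcCostBound]
    _ ≤ 2 * Cv * Cc / ε ^ 2 * (E ^ 2 * log ε ^ 2)
          + Cc * (D / ε ^ 2 * (2 ^ a / (2 ^ a - 1)) * log ε ^ 2) := by
        gcongr
        calc ∑ ℓ ∈ range (L + 1), ((2 : ℝ) ^ a) ^ ℓ ≤ ((2 : ℝ) ^ a) ^ L * (2 ^ a / (2 ^ a - 1)) :=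
              geom_sum_range_succ_le_of_one_lt hq L
          _ ≤ D / ε ^ 2 * (2 ^ a / (2 ^ a - 1)) := by gcongr
          _ ≤ _ := by
              have : 0 < (2 : ℝ) ^ a - 1 := by linarith
              have : 0 < D := by linarith
              exact le_mul_of_one_le_right (by positivity) hlog
    _ = _ := by rw [rpow_neg_two_eq_inv_sq]; ring

theorem mlmcCostBound_le_of_gt {a γ Cv Cc D : ℝ} (ha : 0 < a) (hγa : a < γ) (hCv : 0 < Cv)
    (hCc : 0 < Cc) (hD : 1 ≤ D) :
    ∃ K, 0 < K ∧ ∀ (ε : ℝ) (L : ℕ), 0 < ε → ((2 : ℝ) ^ a) ^ L ≤ D / ε ^ 2 →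
      mlmcCostBound a γ Cv Cc ε L ≤ K * ε ^ (-(2 * γ / a)) := by
  set ρ := (2 : ℝ) ^ ((γ - a) / 2)
  have hρ : 1 < ρ := one_lt_rpow one_lt_two (by linarith)
  have hq : 1 < (2 : ℝ) ^ γ := one_lt_rpow one_lt_two (by linarith)
  have hρsq : ρ ^ 2 = 2 ^ (γ - a) := by
    rw [← rpow_natCast, ← rpow_mul zero_le_two]; norm_num
  refine ⟨(2 * Cv * Cc * (ρ / (ρ - 1)) ^ 2 + Cc * (2 ^ γ / (2 ^ γ - 1))) * D ^ (γ / a), by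
    have : 0 < ρ - 1 := by linarith
    have : 0 < (2 : ℝ) ^ γ - 1 := by linarith
    positivity, fun ε L hε hL => ?_⟩
  set Y := D / ε ^ 2
  have hY : (ε ^ 2)⁻¹ ≤ Y := by
    rw [inv_eq_one_div]; exact div_le_div_of_nonneg_right hD (by positivity)
  have hρL : (ρ ^ L) ^ 2 ≤ Y ^ ((γ - a) / a) := by
    rw [← pow_mul, mul_comm, pow_mul, hρsq]
    exact pow_le_rpow_div_of_pow_le zero_le_two ha (by linarith) hL
  have hγL : ((2 : ℝ) ^ γ) ^ L ≤ Y ^ (γ / a) :=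
    pow_le_rpow_div_of_pow_le zero_le_two ha (by linarith) hL
  have hYpow : Y * Y ^ ((γ - a) / a) = Y ^ (γ / a) := by
    rw [← rpow_one_add' (by positivity) (by positivity)]
    congr 1; field_simp; ring
  calc mlmcCostBound a γ Cv Cc ε L
      ≤ 2 * Cv * Cc / ε ^ 2 * (ρ ^ L * (ρ / (ρ - 1))) ^ 2
          + Cc * (((2 : ℝ) ^ γ) ^ L * (2 ^ γ / (2 ^ γ - 1))) := by
        unfold mlmcCostBound
        gcongr
        · exact geom_sum_range_succ_le_of_one_lt hρ L
        · exact geom_sum_range_succ_le_of_one_lt hq L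
    _ = 2 * Cv * Cc * (ρ / (ρ - 1)) ^ 2 * ((ε ^ 2)⁻¹ * (ρ ^ L) ^ 2)
          + Cc * (2 ^ γ / (2 ^ γ - 1)) * ((2 : ℝ) ^ γ) ^ L := by ring
    _ ≤ 2 * Cv * Cc * (ρ / (ρ - 1)) ^ 2 * (Y * Y ^ ((γ - a) / a))
          + Cc * (2 ^ γ / (2 ^ γ - 1)) * Y ^ (γ / a) := by
        have : 0 < (2 : ℝ) ^ γ - 1 := by linarith
        gcongr
    _ = _ := by rw [hYpow, div_sq_rpow (by linarith) hε, ← mul_div_assoc]; ring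

/-- Multilevel Monte Carlo complexity theorem for the ratio estimator, with
mesh widths `h_ℓ = 2^{−ℓ}`: a mean square error consisting of the squared bias
`C_b h_L^{4s}` plus the multilevel variance `Σ_ℓ C_v h_ℓ^{4s}/N_ℓ` can be made
at most `ε²` at total cost `Σ_ℓ N_ℓ C_c h_ℓ^{−γ}` bounded by `C ε^{−2}` if
`4s > γ`, by `C ε^{−2}(log ε)²` if `4s = γ`, and by `C ε^{−γ/(2s)}` if
`4s < γ`. -/
theorem statement17 (s γ Cb Cv Cc : ℝ)
    (hs : 0 < s) (hγ : 0 < γ) (hCb : 0 < Cb) (hCv : 0 < Cv) (hCc : 0 < Cc) :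
    ∃ C : ℝ, 0 < C ∧ ∀ ε : ℝ, 0 < ε → ε < Real.exp (-1) →
      ∃ (L : ℕ) (N : ℕ → ℕ), (∀ ℓ ≤ L, 0 < N ℓ) ∧
        Cb * ((2 : ℝ) ^ (-(L : ℝ))) ^ (4 * s)
            + ∑ ℓ ∈ Finset.range (L + 1),
                Cv * ((2 : ℝ) ^ (-(ℓ : ℝ))) ^ (4 * s) / N ℓ
          ≤ ε ^ 2 ∧
        (γ < 4 * s →
          ∑ ℓ ∈ Finset.range (L + 1),
              (N ℓ : ℝ) * Cc * ((2 : ℝ) ^ (-(ℓ : ℝ))) ^ (-γ)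
            ≤ C * ε ^ (-2 : ℝ)) ∧
        (4 * s = γ →
          ∑ ℓ ∈ Finset.range (L + 1),
              (N ℓ : ℝ) * Cc * ((2 : ℝ) ^ (-(ℓ : ℝ))) ^ (-γ)
            ≤ C * ε ^ (-2 : ℝ) * Real.log ε ^ 2) ∧
        (4 * s < γ →
          ∑ ℓ ∈ Finset.range (L + 1),
              (N ℓ : ℝ) * Cc * ((2 : ℝ) ^ (-(ℓ : ℝ))) ^ (-γ)
            ≤ C * ε ^ (-(γ / (2 * s)))) := by
  have ha : 0 < 4 * s := by positivity
  have hD : 1 ≤ 2 * 2 ^ (4 * s) * (1 + Cb) := by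
    have := one_le_rpow one_le_two ha.le
    nlinarith
  have levels := fun ε (hε : 0 < ε) (hεe : ε < exp (-1)) =>
    exists_levels_samples (γ := γ) ha hCb hCv hCc hε
      (hεe.trans (exp_lt_one_iff.2 (by norm_num))).le
  rcases lt_trichotomy γ (4 * s) with hlt | rfl | hgt
  · obtain ⟨K, hK, hcost⟩ := mlmcCostBound_le_of_lt hγ hlt hCv hCc (zero_le_one.trans hD)
    refine ⟨K, hK, fun ε hε hεe => ?_⟩
    obtain ⟨L, N, hN, hmse, hcostL, hL⟩ := levels ε hε hεe
    exact ⟨L, N, hN, hmse, fun _ => hcostL.trans (hcost ε L hε hL),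
      fun h => absurd h hlt.ne', fun h => absurd h hlt.not_gt⟩
  · obtain ⟨K, hK, hcost⟩ := mlmcCostBound_le_of_eq ha hCv hCc hD
    refine ⟨K, hK, fun ε hε hεe => ?_⟩
    obtain ⟨L, N, hN, hmse, hcostL, hL⟩ := levels ε hε hεe
    exact ⟨L, N, hN, hmse, fun h => absurd h (lt_irrefl _),
      fun _ => hcostL.trans (hcost ε L hε hεe hL), fun h => absurd h (lt_irrefl _)⟩
  · obtain ⟨K, hK, hcost⟩ := mlmcCostBound_le_of_gt ha hgt hCv hCc hD
    refine ⟨K, hK, fun ε hε hεe => ?_⟩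
    obtain ⟨L, N, hN, hmse, hcostL, hL⟩ := levels ε hε hεe
    rw [show γ / (2 * s) = 2 * γ / (4 * s) by ring]
    exact ⟨L, N, hN, hmse, fun h => absurd h hgt.not_gt, fun h => absurd h hgt.ne,
      fun _ => hcostL.trans (hcost ε L hε hL)⟩
end
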